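/- Let X be a normed space with locally uniformly rotund and Gâteaux smooth norm, and K nonempty closed and almost proximinal. If for some r > 0 the set E_r(K) is dense in X∖K and d_K is uniformly Gâteaux differentiable on this dense set, then d_K is strictly differentiable at every point of X∖K. -/

import Mathlib

open Filter Topology Metric NNReal

noncomputable section

variable {X : Type*}

/-- The distance function generated by a set `K`. -/
def dK [NormedAddCommGroup X] (K : Set X) (x : X) : ℝ := Metric.infDist x K

/-- The set of nearest points (metric projection) of `z` in `K`. -/
def nearPts [NormedAddCommGroup X] (K : Set X) (z : X) : Set X :=
  {p | p ∈ K ∧ ‖z - p‖ = Metric.infDist z K}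

/-- The Clarke generalized directional derivative of `h` at `x` in direction `y`. -/
def clarkeDeriv [NormedAddCommGroup X] [NormedSpace ℝ X] (h : X → ℝ) (x y : X) : ℝ :=
  Filter.limsup (fun p : X × ℝ => (h (p.1 + p.2 • y) - h p.1) / p.2)
    ((𝓝 x) ×ˢ (𝓝[>] (0 : ℝ)))

/-- The Clarke generalized subdifferential of `h` at `x`. -/
def clarkeSubdiff [NormedAddCommGroup X] [NormedSpace ℝ X] (h : X → ℝ) (x : X) :
    Set (X →L[ℝ] ℝ) :=
  {f | ∀ y : X, f y ≤ clarkeDeriv h x y}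

/-- `h` has Gâteaux derivative `f` at `x`. -/
def HasGDeriv [NormedAddCommGroup X] [NormedSpace ℝ X] (h : X → ℝ) (f : X →L[ℝ] ℝ)
    (x : X) : Prop :=
  ∀ y : X, Tendsto (fun t : ℝ => (h (x + t • y) - h x) / t) (𝓝[≠] (0 : ℝ)) (𝓝 (f y))

/-- The subdifferential of the norm at `v`: norm-one functionals attaining the norm at `v`. -/
def normSubdiff [NormedAddCommGroup X] [NormedSpace ℝ X] (v : X) : Set (X →L[ℝ] ℝ) :=
  {f | ‖f‖ = 1 ∧ f v = ‖v‖}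

/-- The norm of `X` is Gâteaux differentiable off `0`. -/
def GateauxSmoothNorm (X : Type*) [NormedAddCommGroup X] [NormedSpace ℝ X] : Prop :=
  ∀ x : X, x ≠ 0 → ∃ f : X →L[ℝ] ℝ, HasGDeriv (fun v : X => ‖v‖) f x

/-- The norm of `X` is Fréchet differentiable off `0`. -/
def FrechetSmoothNorm (X : Type*) [NormedAddCommGroup X] [NormedSpace ℝ X] : Prop :=
  ∀ x : X, x ≠ 0 → ∃ f : X →L[ℝ] ℝ, HasFDerivAt (fun v : X => ‖v‖) f x

/-- The norm of `X` is locally uniformly rotund (LUR). -/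
def LURNorm (X : Type*) [NormedAddCommGroup X] : Prop :=
  ∀ x : X, ‖x‖ = 1 → ∀ u : ℕ → X, (∀ n, ‖u n‖ = 1) →
    Tendsto (fun n => ‖u n + x‖) atTop (𝓝 (2 : ℝ)) → Tendsto u atTop (𝓝 x)

/-- `E(K)`: points outside `K` having a nearest point in `K`. -/
def ESet [NormedAddCommGroup X] (K : Set X) : Set X :=
  {z | z ∉ K ∧ (nearPts K z).Nonempty}

/-- `E'(K)`: points outside `K` all of whose minimizing sequences in `K` converge to a
unique nearest point. -/
def EPrime [NormedAddCommGroup X] (K : Set X) : Set X :=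
  {z | z ∉ K ∧ ∃ p ∈ K, ‖z - p‖ = Metric.infDist z K ∧
    ∀ k : ℕ → X, (∀ n, k n ∈ K) →
      Tendsto (fun n => ‖z - k n‖) atTop (𝓝 (Metric.infDist z K)) →
      Tendsto k atTop (𝓝 p)}

/-- `K` is a sun at `x` with nearest point `p`. -/
def IsSunAt [NormedAddCommGroup X] [NormedSpace ℝ X] (K : Set X) (x p : X) : Prop :=
  p ∈ nearPts K x ∧ ∀ t : ℝ, 0 ≤ t → p ∈ nearPts K (x + (t / ‖x - p‖) • (x - p))

/-- `K` is an almost sun: the sun property holds on a dense subset of `X ∖ K`. -/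
def AlmostSun [NormedAddCommGroup X] [NormedSpace ℝ X] (K : Set X) : Prop :=
  ∀ x : X, x ∉ K → x ∈ closure {z | z ∉ K ∧ ∃ p, IsSunAt K z p}

/-- `K` is a sun. -/
def IsSun [NormedAddCommGroup X] [NormedSpace ℝ X] (K : Set X) : Prop :=
  ∀ x : X, x ∉ K → ∃ p, IsSunAt K x p

/-- `K` is almost proximinal: nearest points exist on a dense subset of `X ∖ K`. -/
def AlmostProximinal [NormedAddCommGroup X] (K : Set X) : Prop :=
  ∀ x : X, x ∉ K → x ∈ closure (ESet K)

/-- `K` is proximinal: every point outside `K` has a nearest point in `K`. -/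
def Proximinal [NormedAddCommGroup X] (K : Set X) : Prop :=
  ∀ x : X, x ∉ K → (nearPts K x).Nonempty

/-- `K` is Chebyshev: every point outside `K` has a unique nearest point in `K`. -/
def Chebyshev [NormedAddCommGroup X] (K : Set X) : Prop :=
  ∀ x : X, x ∉ K → ∃! p, p ∈ nearPts K x

/-- The set `E_r(K)`. -/
def Er [NormedAddCommGroup X] [NormedSpace ℝ X] (K : Set X) (r : ℝ) : Set X :=
  {x | ∃ x₀ p : X, p ∈ nearPts K x₀ ∧ r < Metric.infDist x₀ K ∧
    x = x₀ - (r / ‖x₀ - p‖) • (x₀ - p)}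

/-- `h` is uniformly Gâteaux differentiable on `D` with derivative map `g`. -/
def UniformGateauxOn [NormedAddCommGroup X] [NormedSpace ℝ X]
    (h : X → ℝ) (g : X → X →L[ℝ] ℝ) (D : Set X) : Prop :=
  ∀ ε > (0 : ℝ), ∀ y : X, ‖y‖ = 1 → ∃ δ > (0 : ℝ), ∀ x ∈ D, ∀ t : ℝ,
    t ≠ 0 → |t| < δ → |(h (x + t • y) - h x) / t - g x y| < ε

/-- `h` is uniformly Fréchet differentiable on `D` with derivative map `g`. -/
def UniformFrechetOn [NormedAddCommGroup X] [NormedSpace ℝ X]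
    (h : X → ℝ) (g : X → X →L[ℝ] ℝ) (D : Set X) : Prop :=
  ∀ ε > (0 : ℝ), ∃ δ > (0 : ℝ), ∀ x ∈ D, ∀ y : X, ‖y‖ = 1 → ∀ t : ℝ,
    t ≠ 0 → |t| < δ → |(h (x + t • y) - h x) / t - g x y| < ε

/-- The norm of `X` is uniformly Gâteaux smooth (on the unit sphere). -/
def UniformGateauxSmoothNorm (X : Type*) [NormedAddCommGroup X] [NormedSpace ℝ X] : Prop :=
  ∃ g : X → X →L[ℝ] ℝ, UniformGateauxOn (fun v : X => ‖v‖) g {x : X | ‖x‖ = 1}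

/-- The norm of `X` is uniformly Fréchet smooth (on the unit sphere). -/
def UniformFrechetSmoothNorm (X : Type*) [NormedAddCommGroup X] [NormedSpace ℝ X] : Prop :=
  ∃ g : X → X →L[ℝ] ℝ, UniformFrechetOn (fun v : X => ‖v‖) g {x : X | ‖x‖ = 1}


/-! Since `d_K` is `1`-Lipschitz, each difference quotient `q_t(z) = (d_K(z + t y) - d_K(z)) / t`
is continuous in `z`, and uniform Gâteaux differentiability says that `q_t → g(·) y` uniformly on
`E_r(K)` as `t → 0`. Hence `z ↦ g z y` is uniformly continuous on `E_r(K)` and has a limit `φ y` at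
every point `x` of the open set `X ∖ K ⊆ closure E_r(K)`; `φ` is linear, being a pointwise limit of
linear maps. The uniform convergence passes to the closure, so `q_t(z) → φ y` as `(z, t) → (x, 0⁺)`:
the Clarke derivative at `x` is the linear map `φ`, and the Clarke subdifferential is `{φ}`. -/

def diffQuot [NormedAddCommGroup X] [NormedSpace ℝ X] (h : X → ℝ) (y x : X) (t : ℝ) : ℝ :=
  (h (x + t • y) - h x) / t

theorem TendstoUniformlyOn.tendsto_prod_of_closure_mem_nhds {ι α β : Type*}
    [TopologicalSpace α] [PseudoMetricSpace β] {F : ι → α → β} {f : α → β} {p : Filter ι}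
    {D : Set α} {x : α} {c : β} (hF : TendstoUniformlyOn F f p D)
    (hcont : ∀ᶠ i in p, Continuous (F i)) (hD : closure D ∈ 𝓝 x)
    (hf : Tendsto f (𝓝[D] x) (𝓝 c)) :
    Tendsto (fun q : α × ι => F q.2 q.1) (𝓝 x ×ˢ p) (𝓝 c) := by
  rw [Metric.tendsto_nhds]
  intro ε hε
  obtain ⟨U, hU, hUopen, hUf⟩ : ∃ U ∈ 𝓝 x, IsOpen U ∧ ∀ e ∈ U ∩ D, dist (f e) c < ε / 4 := by
    obtain ⟨V, hV, hVf⟩ :=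
      mem_nhdsWithin_iff_exists_mem_nhds_inter.1 (hf (ball_mem_nhds c (by positivity : 0 < ε / 4)))
    obtain ⟨U, hUV, hUopen, hxU⟩ := mem_nhds_iff.1 hV
    exact ⟨U, hUopen.mem_nhds hxU, hUopen, fun e ⟨heU, heD⟩ => hVf ⟨hUV heU, heD⟩⟩
  have hnear : ∀ᶠ i in p, Continuous (F i) ∧ ∀ e ∈ D, dist (f e) (F i e) < ε / 4 :=
    hcont.and (Metric.tendstoUniformlyOn_iff.1 hF _ (by positivity))
  filter_upwards [prod_mem_prod (inter_mem hU hD) hnear]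
  rintro ⟨z, i⟩ ⟨hz, hi, hiD⟩
  have hUD : U ∩ D ⊆ {z | dist (F i z) c ≤ ε / 2} := fun e ⟨heU, heD⟩ =>
    calc dist (F i e) c ≤ dist (f e) (F i e) + dist (f e) c := dist_triangle_left _ _ _
      _ ≤ ε / 2 := by linarith [hiD e heD, hUf e ⟨heU, heD⟩]
  have hclosed : IsClosed {z | dist (F i z) c ≤ ε / 2} :=
    isClosed_le (by fun_prop) continuous_const
  have : dist (F i z) c ≤ ε / 2 := hclosed.closure_subset_iff.2 hUD (hUopen.inter_closure hz)
  linarith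

section DiffQuot

variable [NormedAddCommGroup X] [NormedSpace ℝ X] {h : X → ℝ}

theorem diffQuot_smul (h : X → ℝ) (y x : X) {a : ℝ} (ha : a ≠ 0) (t : ℝ) :
    diffQuot h (a • y) x t = a * diffQuot h y x (a * t) := by
  rcases eq_or_ne t 0 with rfl | ht
  · simp [diffQuot]
  · simp only [diffQuot, smul_smul, mul_comm t a]
    field_simp

theorem abs_diffQuot_le {L : ℝ≥0} (hh : LipschitzWith L h) (y x : X) (t : ℝ) :
    |diffQuot h y x t| ≤ L * ‖y‖ := by
  rcases eq_or_ne t 0 with rfl | ht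
  · simp only [diffQuot, div_zero, abs_zero]
    positivity
  · rw [diffQuot, abs_div, div_le_iff₀ (abs_pos.2 ht)]
    calc |h (x + t • y) - h x| ≤ L * ‖x + t • y - x‖ := by
          rw [← Real.dist_eq, ← dist_eq_norm]
          exact hh.dist_le_mul _ _
      _ = L * ‖y‖ * |t| := by rw [add_sub_cancel_left, norm_smul, Real.norm_eq_abs]; ring

theorem UniformContinuous.diffQuot (hh : UniformContinuous h) (y : X) (t : ℝ) :
    UniformContinuous (diffQuot h y · t) :=
  ((hh.comp (uniformContinuous_id.add uniformContinuous_const)).sub hh).div_const' t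

end DiffQuot

namespace UniformGateauxOn

variable [NormedAddCommGroup X] [NormedSpace ℝ X] {h : X → ℝ} {g : X → X →L[ℝ] ℝ} {D : Set X}

theorem tendstoUniformlyOn_diffQuot (hg : UniformGateauxOn h g D) (y : X) :
    TendstoUniformlyOn (fun t x => diffQuot h y x t) (fun x => g x y) (𝓝[≠] 0) D := by
  rw [Metric.tendstoUniformlyOn_iff]
  intro ε hε
  rcases eq_or_ne y 0 with rfl | hy
  · simp [diffQuot, hε]
  have hny : 0 < ‖y‖ := norm_pos_iff.2 hy
  set u := ‖y‖⁻¹ • y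
  have hu : ‖u‖ = 1 := by rw [norm_smul, norm_inv, norm_norm, inv_mul_cancel₀ hny.ne']
  have hyu : y = ‖y‖ • u := (smul_inv_smul₀ hny.ne' y).symm
  obtain ⟨δ, hδ, H⟩ := hg (ε / ‖y‖) (by positivity) u hu
  have hsmall : ∀ᶠ t in 𝓝 (0 : ℝ), |t - 0| < δ / ‖y‖ := eventually_abs_sub_lt 0 (by positivity)
  filter_upwards [self_mem_nhdsWithin, nhdsWithin_le_nhds hsmall] with t ht htδ x hx
  have hst : |‖y‖ * t| < δ := by
    rw [sub_zero, lt_div_iff₀ hny] at htδ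
    rwa [abs_mul, abs_norm, mul_comm]
  have hscale : diffQuot h y x t - g x y = ‖y‖ * (diffQuot h u x (‖y‖ * t) - g x u) := by
    conv_lhs => rw [hyu]
    rw [diffQuot_smul h u x hny.ne', map_smul, smul_eq_mul, mul_sub]
  calc dist (g x y) (diffQuot h y x t)
      = ‖y‖ * |diffQuot h u x (‖y‖ * t) - g x u| := by
        rw [Real.dist_eq, abs_sub_comm, hscale, abs_mul, abs_norm]
    _ < ‖y‖ * (ε / ‖y‖) := by gcongr; exact H x hx _ (mul_ne_zero hny.ne' ht) hst
    _ = ε := mul_div_cancel₀ ε hny.ne'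

theorem uniformContinuousOn_apply (hh : UniformContinuous h) (hg : UniformGateauxOn h g D)
    (y : X) : UniformContinuousOn (fun x => g x y) D :=
  (hg.tendstoUniformlyOn_diffQuot y).uniformContinuousOn
    (Eventually.of_forall fun t => (hh.diffQuot y t).uniformContinuousOn).frequently

theorem exists_tendsto_apply (hh : UniformContinuous h) (hg : UniformGateauxOn h g D) {x : X}
    (hx : x ∈ closure D) (y : X) : ∃ c, Tendsto (fun e => g e y) (𝓝[D] x) (𝓝 c) := by
  have := mem_closure_iff_nhdsWithin_neBot.1 hx
  exact cauchy_map_iff_exists_tendsto.1 <|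
    (cauchy_nhds.mono nhdsWithin_le_nhds : Cauchy (𝓝[D] x)).map_of_le
      (hg.uniformContinuousOn_apply hh y) inf_le_right

theorem exists_tendsto_diffQuot {L : ℝ≥0} (hh : LipschitzWith L h) (hg : UniformGateauxOn h g D)
    {x : X} (hD : closure D ∈ 𝓝 x) : ∃ F : X →L[ℝ] ℝ, ∀ y,
      Tendsto (fun q : X × ℝ => diffQuot h y q.1 q.2) (𝓝 x ×ˢ 𝓝[>] 0) (𝓝 (F y)) := by
  have hx : x ∈ closure D := mem_of_mem_nhds hD
  have := mem_closure_iff_nhdsWithin_neBot.1 hx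
  choose φ hφ using hg.exists_tendsto_apply hh.uniformContinuous hx
  have hlim : ∀ y, Tendsto (fun q : X × ℝ => diffQuot h y q.1 q.2) (𝓝 x ×ˢ 𝓝[>] 0) (𝓝 (φ y)) :=
    fun y => TendstoUniformlyOn.tendsto_prod_of_closure_mem_nhds
      (fun u hu => (hg.tendstoUniformlyOn_diffQuot y u hu).filter_mono (nhdsGT_le_nhdsNE 0))
      (Eventually.of_forall fun t => (hh.uniformContinuous.diffQuot y t).continuous) hD (hφ y)
  have hbound : ∀ y, ‖φ y‖ ≤ L * ‖y‖ := fun y =>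
    le_of_tendsto (hlim y).norm (Eventually.of_forall fun q => abs_diffQuot_le hh y q.1 q.2)
  let Φ : X →ₗ[ℝ] ℝ :=
    linearMapOfTendsto φ (fun e => (g e : X →ₗ[ℝ] ℝ)) (l := 𝓝[D] x) (tendsto_pi_nhds.2 hφ)
  exact ⟨Φ.mkContinuous L hbound, hlim⟩

end UniformGateauxOn

theorem clarkeSubdiff_eq_singleton_of_tendsto [NormedAddCommGroup X] [NormedSpace ℝ X]
    {h : X → ℝ} {x : X} {F : X →L[ℝ] ℝ}
    (hF : ∀ y, Tendsto (fun q : X × ℝ => diffQuot h y q.1 q.2) (𝓝 x ×ˢ 𝓝[>] 0) (𝓝 (F y))) :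
    clarkeSubdiff h x = {F} := by
  have hderiv : ∀ y, clarkeDeriv h x y = F y := fun y => (hF y).limsup_eq
  ext f
  simp only [clarkeSubdiff, hderiv, Set.mem_ofPred_eq, Set.mem_singleton_iff]
  refine ⟨fun hf => ContinuousLinearMap.ext fun y => le_antisymm (hf y) ?_, fun hf y => hf ▸ le_rfl⟩
  simpa using hf (-y)

theorem strictly_smooth_of_uniform_gateaux_on_Er_general
    [NormedAddCommGroup X] [NormedSpace ℝ X] (K : Set X)
    (hcl : IsClosed K) (r : ℝ)
    (hdense : Kᶜ ⊆ closure (Er K r)) (g : X → X →L[ℝ] ℝ)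
    (hunif : UniformGateauxOn (dK K) g (Er K r)) :
    ∀ x : X, x ∉ K → ∃ f : X →L[ℝ] ℝ, clarkeSubdiff (dK K) x = {f} := by
  intro x hx
  have hD : closure (Er K r) ∈ 𝓝 x := mem_of_superset (hcl.isOpen_compl.mem_nhds hx) hdense
  obtain ⟨F, hF⟩ := hunif.exists_tendsto_diffQuot (lipschitz_infDist_pt K) hD
  exact ⟨F, clarkeSubdiff_eq_singleton_of_tendsto hF⟩

theorem strictly_smooth_of_uniform_gateaux_on_Er
    [NormedAddCommGroup X] [NormedSpace ℝ X] (K : Set X) (hK : K.Nonempty)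
    (hcl : IsClosed K) (hLUR : LURNorm X) (hsm : GateauxSmoothNorm X)
    (hap : AlmostProximinal K) (r : ℝ) (hr : 0 < r)
    (hdense : Kᶜ ⊆ closure (Er K r)) (g : X → X →L[ℝ] ℝ)
    (hgd : ∀ x ∈ Er K r, HasGDeriv (dK K) (g x) x)
    (hunif : UniformGateauxOn (dK K) g (Er K r)) :
    ∀ x : X, x ∉ K → ∃ f : X →L[ℝ] ℝ, clarkeSubdiff (dK K) x = {f} :=
  strictly_smooth_of_uniform_gateaux_on_Er_general K hcl r hdense g hunif
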